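/- Let F: ℝ → [0, ∞) be a locally integrable function, and suppose that (1/S)·∫_{-S}^{0} F(s) ds → 0 as S → ∞. Fix δ > 0 and R > 0. Then the Lebesgue measure of the set {s ∈ [−S, 0]: sup_{0 < r ≤ R} (1/(2r))·∫_{s−r}^{s+r} F(s') ds' > δ} divided by S tends to 0 as S → ∞. -/

import Mathlib

/-!
Vitali's covering lemma gives the weak-type (1,1) bound for the restricted maximal function:
the set of `s ∈ [-S, 0]` admitting a window of radius `r ≤ R` on which `F` averages more than `δ`
has measure at most `4 / δ` times the integral of `|F|` over the `R`-neighbourhood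
`[-S - R, R]` of `[-S, 0]`. After dividing by `S`, the part over `[-S - R, 0]` is `(S + R) / S`
times an average that tends to zero by hypothesis, and the part over `[0, R]` is a constant
divided by `S`.
-/

open Filter MeasureTheory Metric Set Topology

theorem Real.cthickening_Icc {a b R : ℝ} (hab : a ≤ b) (hR : 0 ≤ R) :
    cthickening R (Icc a b) = Icc (a - R) (b + R) := by
  rw [Real.Icc_eq_closedBall, cthickening_closedBall hR (by linarith), Real.closedBall_eq_Icc]
  congr 1 <;> ring

theorem volume_closedBall_le_of_lt_average (F : ℝ → ℝ) {b r δ τ : ℝ} (hr : 0 < r) (hδ : 0 < δ)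
    (hτ : 0 ≤ τ) (h : δ < (1 / (2 * r)) * ∫ x in Ioo (b - r) (b + r), F x) :
    volume (closedBall b (τ * r)) ≤ ENNReal.ofReal (τ / δ) * ∫⁻ x in ball b r, ‖F x‖ₑ := by
  have hmass : 2 * r * δ ≤ ‖∫ x in ball b r, F x‖ := by
    rw [Real.ball_eq_Ioo]
    rw [one_div_mul_eq_div, lt_div_iff₀ (by positivity)] at h
    exact (by linarith : 2 * r * δ ≤ _).trans (Real.le_norm_self _)
  calc volume (closedBall b (τ * r))
      = ENNReal.ofReal (τ / δ) * ENNReal.ofReal (2 * r * δ) := by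
        rw [Real.volume_closedBall, ← ENNReal.ofReal_mul (by positivity)]
        congr 1
        field_simp
    _ ≤ ENNReal.ofReal (τ / δ) * ∫⁻ x in ball b r, ‖F x‖ₑ := by
        gcongr
        exact (ENNReal.ofReal_le_ofReal hmass).trans
          ((ofReal_norm _).trans_le (enorm_integral_le_lintegral_enorm _))

theorem volume_setOf_lt_average_le (F : ℝ → ℝ) {δ : ℝ} (hδ : 0 < δ) (A : Set ℝ) (R : ℝ) :
    volume {s | s ∈ A ∧ ∃ r, 0 < r ∧ r ≤ R ∧
        δ < (1 / (2 * r)) * ∫ x in Ioo (s - r) (s + r), F x}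
      ≤ ENNReal.ofReal (4 / δ) * ∫⁻ x in cthickening R A, ‖F x‖ₑ := by
  set E := {s | s ∈ A ∧ ∃ r, 0 < r ∧ r ≤ R ∧
    δ < (1 / (2 * r)) * ∫ x in Ioo (s - r) (s + r), F x}
  choose! rad hrad_pos hrad_le hrad_avg using fun s (hs : s ∈ E) => hs.2
  obtain ⟨u, huE, hdisj, hcover⟩ :=
    Vitali.exists_disjoint_subfamily_covering_enlargement_closedBall E id rad R hrad_le 4
      (by norm_num)
  simp only [id] at hdisj hcover
  have hu : u.Countable := hdisj.countable_of_nonempty_interior fun b hb =>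
    ⟨b, ball_subset_interior_closedBall (mem_ball_self (hrad_pos b (huE hb)))⟩
  have hE_sub : E ⊆ ⋃ b ∈ u, closedBall b (4 * rad b) := fun a ha => by
    obtain ⟨b, hb, hab⟩ := hcover a ha
    exact mem_biUnion hb (hab (mem_closedBall_self (hrad_pos a ha).le))
  have hballs_sub : (⋃ b ∈ u, ball b (rad b)) ⊆ cthickening R A := iUnion₂_subset fun b hb =>
    ball_subset_closedBall.trans <| (closedBall_subset_closedBall (hrad_le b (huE hb))).trans <|
      closedBall_subset_cthickening (huE hb).1 R
  calc volume E ≤ ∑' b : u, volume (closedBall (b : ℝ) (4 * rad b)) :=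
        (measure_mono hE_sub).trans (measure_biUnion_le volume hu _)
    _ ≤ ∑' b : u, ENNReal.ofReal (4 / δ) * ∫⁻ x in ball (b : ℝ) (rad b), ‖F x‖ₑ :=
        ENNReal.tsum_le_tsum fun b => volume_closedBall_le_of_lt_average F
          (hrad_pos b (huE b.2)) hδ (by norm_num) (hrad_avg b (huE b.2))
    _ = ENNReal.ofReal (4 / δ) * ∫⁻ x in ⋃ b ∈ u, ball b (rad b), ‖F x‖ₑ := by
        rw [ENNReal.tsum_mul_left, lintegral_biUnion hu (fun _ _ => measurableSet_ball)
          (hdisj.mono fun _ => ball_subset_closedBall)]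
    _ ≤ ENNReal.ofReal (4 / δ) * ∫⁻ x in cthickening R A, ‖F x‖ₑ := by
        gcongr

theorem toReal_volume_setOf_lt_average_Icc_le {F : ℝ → ℝ} (hF0 : ∀ s, 0 ≤ F s)
    (hFloc : LocallyIntegrable F) {δ R S : ℝ} (hδ : 0 < δ) (hR : 0 ≤ R) (hS : 0 ≤ S) :
    (volume {s | s ∈ Icc (-S) 0 ∧ ∃ r, 0 < r ∧ r ≤ R ∧
        δ < (1 / (2 * r)) * ∫ x in Ioo (s - r) (s + r), F x}).toReal
      ≤ 4 / δ * ((∫ x in Icc (-(S + R)) 0, F x) + ∫ x in Icc 0 R, F x) := by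
  have hlintegral : ∀ a b : ℝ, ∫⁻ x in Icc a b, ‖F x‖ₑ = ENNReal.ofReal (∫ x in Icc a b, F x) :=
    fun a b => by
      rw [← ofReal_integral_norm_eq_lintegral_enorm
        (hFloc.integrableOn_isCompact isCompact_Icc)]
      simp only [Real.norm_of_nonneg (hF0 _)]
  have hsplit : cthickening R (Icc (-S) 0) ⊆ Icc (-(S + R)) 0 ∪ Icc 0 R := by
    rw [Real.cthickening_Icc (by linarith) hR, neg_add', zero_add]
    exact Icc_subset_Icc_union_Icc
  have hint_nonneg : ∀ a b : ℝ, 0 ≤ ∫ x in Icc a b, F x :=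
    fun a b => setIntegral_nonneg measurableSet_Icc fun x _ => hF0 x
  refine ENNReal.toReal_le_of_le_ofReal
    (mul_nonneg (by positivity) (add_nonneg (hint_nonneg _ _) (hint_nonneg _ _))) ?_
  calc _ ≤ ENNReal.ofReal (4 / δ) * ∫⁻ x in cthickening R (Icc (-S) 0), ‖F x‖ₑ :=
        volume_setOf_lt_average_le F hδ (Icc (-S) 0) R
    _ ≤ ENNReal.ofReal (4 / δ) *
          ((∫⁻ x in Icc (-(S + R)) 0, ‖F x‖ₑ) + ∫⁻ x in Icc 0 R, ‖F x‖ₑ) := by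
        gcongr
        exact (lintegral_mono_set hsplit).trans (lintegral_union_le _ _ _)
    _ = _ := by
        rw [hlintegral, hlintegral, ← ENNReal.ofReal_add (hint_nonneg _ _) (hint_nonneg _ _),
          ← ENNReal.ofReal_mul (by positivity)]

theorem tendsto_add_const_div_of_tendsto_inv_mul {g : ℝ → ℝ}
    (hg : Tendsto (fun S => 1 / S * g S) atTop (𝓝 0)) (R c : ℝ) :
    Tendsto (fun S => (g (S + R) + c) / S) atTop (𝓝 0) := by
  have hshift : Tendsto (fun S => 1 / (S + R) * g (S + R)) atTop (𝓝 0) :=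
    hg.comp (tendsto_atTop_add_const_right atTop R tendsto_id)
  have hratio : Tendsto (fun S => 1 + R / S) atTop (𝓝 1) := by
    simpa using (tendsto_const_nhds (x := (1 : ℝ))).add
      ((tendsto_const_nhds (x := R)).div_atTop tendsto_id)
  have hlim := (hratio.mul hshift).add ((tendsto_const_nhds (x := c)).div_atTop tendsto_id)
  rw [mul_zero, zero_add] at hlim
  refine hlim.congr' ?_
  filter_upwards [eventually_gt_atTop (max 0 (-R))] with S hS
  have hSR : S + R ≠ 0 := by linarith [le_max_right 0 (-R)]
  have hS0 : S ≠ 0 := by linarith [le_max_left 0 (-R)]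
  simp only [id]
  field_simp

theorem stmt_13 (F : ℝ → ℝ) (hF0 : ∀ s, 0 ≤ F s)
    (hFloc : LocallyIntegrable F)
    (havg : Tendsto (fun S : ℝ => (1 / S) * ∫ s in Set.Icc (-S) 0, F s)
      atTop (nhds 0))
    (δ R : ℝ) (hδ : 0 < δ) (hR : 0 < R) :
    Tendsto (fun S : ℝ =>
      (volume {s : ℝ | s ∈ Set.Icc (-S) 0 ∧
        ∃ r : ℝ, 0 < r ∧ r ≤ R ∧
          δ < (1 / (2 * r)) * ∫ s' in Set.Ioo (s - r) (s + r), F s'}).toReal / S)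
      atTop (nhds 0) := by
  have hupper := (tendsto_add_const_div_of_tendsto_inv_mul havg R
    (∫ x in Icc 0 R, F x)).const_mul (4 / δ)
  rw [mul_zero] at hupper
  refine tendsto_of_tendsto_of_tendsto_of_le_of_le' tendsto_const_nhds hupper ?_ ?_ <;>
    filter_upwards [eventually_gt_atTop 0] with S hS
  · exact div_nonneg ENNReal.toReal_nonneg hS.le
  · rw [← mul_div_assoc]
    gcongr
    exact toReal_volume_setOf_lt_average_Icc_le hF0 hFloc hδ hR.le hS.le
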